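/- arXiv:2509.01466 — 6 statements merged into one kernel-verified Lean document; each statement's English description precedes it below -/
import Mathlib

section
/- Let R be a ring and let ζ : Set R → Set R → Prop be a relation on subsets of R satisfying the overlap axiom (if A ∩ B ≠ ∅ then A ζ B) and such that addition is proximally continuous, i.e. for all W₁, W₂, K₁, K₂ ⊆ R, if W₁ ζ K₁ and W₂ ζ K₂ then (W₁ + W₂) ζ (K₁ + K₂). If F ⊆ R is ζ-closed (cl_ζ(F) = F), then for every ε ∈ R the translate ε + F = {ε + f : f ∈ F} is ζ-closed. -/
open Pointwise

theorem proximal_translate_of_closed_closed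
    {R : Type*} [Ring R] (ζ : Set R → Set R → Prop)
    (hover : ∀ A B : Set R, (A ∩ B).Nonempty → ζ A B)
    (hadd : ∀ W₁ W₂ K₁ K₂ : Set R, ζ W₁ K₁ → ζ W₂ K₂ → ζ (W₁ + W₂) (K₁ + K₂))
    (F : Set R) (hF : {x : R | ζ {x} F} = F) (ε : R) :
    {x : R | ζ {x} ((fun f : R => ε + f) '' F)} = (fun f : R => ε + f) '' F := by
  have himg : (fun f : R => ε + f) '' F = {ε} + F := by
    ext x; simp [Set.mem_add]
  ext x
  constructor
  · intro hx
    have h1 : ζ {-ε} {-ε} := hover _ _ ⟨-ε, by simp⟩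
    have h2 := hadd _ _ _ _ h1 hx
    have e1 : ({-ε} : Set R) + {x} = {-ε + x} := by simp [Set.singleton_add_singleton]
    have e2 : ({-ε} : Set R) + ((fun f : R => ε + f) '' F) = F := by
      rw [himg, ← add_assoc]
      simp [Set.singleton_add_singleton]
    rw [e1, e2] at h2
    have : -ε + x ∈ F := by rw [← hF]; exact h2
    exact ⟨-ε + x, this, by simp⟩
  · intro hx
    exact hover _ _ ⟨x, rfl, hx⟩
end

section
/- Let R be a ring with unity and let ζ : Set R → Set R → Prop be a relation on subsets of R satisfying the overlap axiom (if A ∩ B ≠ ∅ then A ζ B) and such that multiplication is proximally continuous, i.e. for all W₁, W₂, K₁, K₂ ⊆ R, if W₁ ζ K₁ and W₂ ζ K₂ then (W₁ * W₂) ζ (K₁ * K₂). Let λ ∈ R be invertible (there is μ ∈ R with λ * μ = 1 and μ * λ = 1). If V ⊆ R is ζ-closed (cl_ζ(V) = V), then both λ * V = {λ * v : v ∈ V} and V * λ = {v * λ : v ∈ V} are ζ-closed. -/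
open Pointwise

theorem proximal_unit_mul_of_closed_closed
    {R : Type*} [Ring R] (ζ : Set R → Set R → Prop)
    (hover : ∀ A B : Set R, (A ∩ B).Nonempty → ζ A B)
    (hmul : ∀ W₁ W₂ K₁ K₂ : Set R, ζ W₁ K₁ → ζ W₂ K₂ → ζ (W₁ * W₂) (K₁ * K₂))
    (lam mu : R) (h₁ : lam * mu = 1) (h₂ : mu * lam = 1)
    (V : Set R) (hV : {x : R | ζ {x} V} = V) :
    ({x : R | ζ {x} ((fun v : R => lam * v) '' V)} = (fun v : R => lam * v) '' V) ∧
    ({x : R | ζ {x} ((fun v : R => v * lam) '' V)} = (fun v : R => v * lam) '' V) := by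
  constructor
  · ext x
    simp only [Set.mem_setOf_eq]
    constructor
    · intro hx
      have key : ζ ({mu} * {x}) ({mu} * ((fun v : R => lam * v) '' V)) :=
        hmul _ _ _ _ (hover _ _ ⟨mu, by simp⟩) hx
      have e1 : ({mu} : Set R) * {x} = {mu * x} := Set.singleton_mul_singleton
      have e2 : ({mu} : Set R) * ((fun v : R => lam * v) '' V) = V := by
        ext y
        simp only [Set.mem_mul, Set.mem_singleton_iff, Set.mem_image]
        constructor
        · rintro ⟨a, ha, b, ⟨v, hv, rfl⟩, rfl⟩
          subst ha
          rwa [← mul_assoc, h₂, one_mul]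
        · intro hy
          exact ⟨mu, rfl, lam * y, ⟨y, hy, rfl⟩, by rw [← mul_assoc, h₂, one_mul]⟩
      rw [e1, e2] at key
      have : mu * x ∈ V := hV ▸ key
      exact ⟨mu * x, this, by show lam * (mu * x) = x; rw [← mul_assoc, h₁, one_mul]⟩
    · intro hx
      exact hover _ _ ⟨x, by simp, hx⟩
  · ext x
    simp only [Set.mem_setOf_eq]
    constructor
    · intro hx
      have key : ζ ({x} * {mu}) (((fun v : R => v * lam) '' V) * {mu}) :=
        hmul _ _ _ _ hx (hover _ _ ⟨mu, by simp⟩)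
      have e1 : ({x} : Set R) * {mu} = {x * mu} := Set.singleton_mul_singleton
      have e2 : ((fun v : R => v * lam) '' V) * ({mu} : Set R) = V := by
        ext y
        simp only [Set.mem_mul, Set.mem_singleton_iff, Set.mem_image]
        constructor
        · rintro ⟨a, ⟨v, hv, rfl⟩, b, hb, rfl⟩
          subst hb
          rwa [mul_assoc, h₁, mul_one]
        · intro hy
          exact ⟨y * lam, ⟨y, hy, rfl⟩, mu, rfl, by rw [mul_assoc, h₁, mul_one]⟩
      rw [e1, e2] at key
      have : x * mu ∈ V := hV ▸ key
      exact ⟨x * mu, this, by show x * mu * lam = x; rw [mul_assoc, h₂, mul_one]⟩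
    · intro hx
      exact hover _ _ ⟨x, by simp, hx⟩
end

section
/- Let R₁, R₂ be rings with relations ζ : Set R₁ → Set R₁ → Prop and θ : Set R₂ → Set R₂ → Prop such that in each ring addition, multiplication, and negation are proximally continuous (for all W₁, W₂, K₁, K₂, W₁ near K₁ and W₂ near K₂ imply (W₁ + W₂) near (K₁ + K₂) and (W₁ * W₂) near (K₁ * K₂), and W near K implies (−W) near (−K)). Define the product relation ξ on subsets of R₁ × R₂ by A ξ B iff (Prod.fst '' A) ζ (Prod.fst '' B) and (Prod.snd '' A) θ (Prod.snd '' B). Then the product ring R₁ × R₂ with componentwise operations is a proximal ring with respect to ξ: addition, multiplication, and negation on R₁ × R₂ are proximally continuous with respect to ξ in the same sense. -/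
open Pointwise

theorem proximal_ring_prod
    {R₁ R₂ : Type*} [Ring R₁] [Ring R₂]
    (ζ : Set R₁ → Set R₁ → Prop) (θ : Set R₂ → Set R₂ → Prop)
    (haddζ : ∀ W₁ W₂ K₁ K₂ : Set R₁, ζ W₁ K₁ → ζ W₂ K₂ → ζ (W₁ + W₂) (K₁ + K₂))
    (hmulζ : ∀ W₁ W₂ K₁ K₂ : Set R₁, ζ W₁ K₁ → ζ W₂ K₂ → ζ (W₁ * W₂) (K₁ * K₂))
    (hnegζ : ∀ W K : Set R₁, ζ W K → ζ (-W) (-K))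
    (haddθ : ∀ W₁ W₂ K₁ K₂ : Set R₂, θ W₁ K₁ → θ W₂ K₂ → θ (W₁ + W₂) (K₁ + K₂))
    (hmulθ : ∀ W₁ W₂ K₁ K₂ : Set R₂, θ W₁ K₁ → θ W₂ K₂ → θ (W₁ * W₂) (K₁ * K₂))
    (hnegθ : ∀ W K : Set R₂, θ W K → θ (-W) (-K)) :
    let ξ : Set (R₁ × R₂) → Set (R₁ × R₂) → Prop :=
      fun A B => ζ (Prod.fst '' A) (Prod.fst '' B) ∧ θ (Prod.snd '' A) (Prod.snd '' B)
    (∀ W₁ W₂ K₁ K₂ : Set (R₁ × R₂), ξ W₁ K₁ → ξ W₂ K₂ → ξ (W₁ + W₂) (K₁ + K₂)) ∧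
    (∀ W₁ W₂ K₁ K₂ : Set (R₁ × R₂), ξ W₁ K₁ → ξ W₂ K₂ → ξ (W₁ * W₂) (K₁ * K₂)) ∧
    (∀ W K : Set (R₁ × R₂), ξ W K → ξ (-W) (-K)) := by
  intro ξ
  have fadd : ∀ (A B : Set (R₁ × R₂)), Prod.fst '' (A + B) = Prod.fst '' A + Prod.fst '' B :=
    fun A B => Set.image_image2_distrib (fun _ _ => rfl)
  have sadd : ∀ (A B : Set (R₁ × R₂)), Prod.snd '' (A + B) = Prod.snd '' A + Prod.snd '' B :=
    fun A B => Set.image_image2_distrib (fun _ _ => rfl)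
  have fmul : ∀ (A B : Set (R₁ × R₂)), Prod.fst '' (A * B) = Prod.fst '' A * Prod.fst '' B :=
    fun A B => Set.image_image2_distrib (fun _ _ => rfl)
  have smul : ∀ (A B : Set (R₁ × R₂)), Prod.snd '' (A * B) = Prod.snd '' A * Prod.snd '' B :=
    fun A B => Set.image_image2_distrib (fun _ _ => rfl)
  have fneg : ∀ (A : Set (R₁ × R₂)), Prod.fst '' (-A) = -(Prod.fst '' A) := by
    intro A
    ext x
    constructor
    · rintro ⟨a, ha, rfl⟩
      rw [Set.mem_neg]
      exact ⟨-a, ha, by simp⟩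
    · intro hx
      rw [Set.mem_neg] at hx
      obtain ⟨a, ha, h⟩ := hx
      exact ⟨-a, by simpa [Set.mem_neg] using ha, by simp [h]⟩
  have sneg : ∀ (A : Set (R₁ × R₂)), Prod.snd '' (-A) = -(Prod.snd '' A) := by
    intro A
    ext x
    constructor
    · rintro ⟨a, ha, rfl⟩
      rw [Set.mem_neg]
      exact ⟨-a, ha, by simp⟩
    · intro hx
      rw [Set.mem_neg] at hx
      obtain ⟨a, ha, h⟩ := hx
      exact ⟨-a, by simpa [Set.mem_neg] using ha, by simp [h]⟩
  refine ⟨?_, ?_, ?_⟩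
  · intro W₁ W₂ K₁ K₂ h₁ h₂
    exact ⟨by rw [fadd, fadd]; exact haddζ _ _ _ _ h₁.1 h₂.1,
           by rw [sadd, sadd]; exact haddθ _ _ _ _ h₁.2 h₂.2⟩
  · intro W₁ W₂ K₁ K₂ h₁ h₂
    exact ⟨by rw [fmul, fmul]; exact hmulζ _ _ _ _ h₁.1 h₂.1,
           by rw [smul, smul]; exact hmulθ _ _ _ _ h₁.2 h₂.2⟩
  · intro W K h
    exact ⟨by rw [fneg, fneg]; exact hnegζ _ _ h.1,
           by rw [sneg, sneg]; exact hnegθ _ _ h.2⟩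
end

section
/- Let R be a ring with unity, X a type, and Φ : R → X a probe function. Define the descriptive relation ζ_Φ on subsets of R by A ζ_Φ B iff (Φ '' A) ∩ (Φ '' B) ≠ ∅. Suppose addition and multiplication are descriptively continuous: for all W₁, W₂, K₁, K₂ ⊆ R, if W₁ ζ_Φ K₁ and W₂ ζ_Φ K₂ then (W₁ + W₂) ζ_Φ (K₁ + K₂) and (W₁ * W₂) ζ_Φ (K₁ * K₂). Let a ∈ R be invertible (there is b with a * b = 1 and b * a = 1). Then the four maps φ_a(w) = w + a, β_a(w) = a + w, σ_a(w) = a * w, γ_a(w) = w * a are descriptive homeomorphisms: each is bijective, descriptively continuous (W ζ_Φ K implies image of W ζ_Φ image of K), and its inverse is descriptively continuous. -/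
open Pointwise

theorem descriptive_ring_unit_translations_des_homeo
    {R X : Type*} [Ring R] (Φ : R → X) :
    let ζΦ : Set R → Set R → Prop := fun A B => ((Φ '' A) ∩ (Φ '' B)).Nonempty
    ∀ (_hadd : ∀ W₁ W₂ K₁ K₂ : Set R,
        ζΦ W₁ K₁ → ζΦ W₂ K₂ → ζΦ (W₁ + W₂) (K₁ + K₂))
      (_hmul : ∀ W₁ W₂ K₁ K₂ : Set R,
        ζΦ W₁ K₁ → ζΦ W₂ K₂ → ζΦ (W₁ * W₂) (K₁ * K₂))
      (a b : R), a * b = 1 → b * a = 1 →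
    (Function.Bijective (fun w : R => w + a) ∧
      (∀ W K : Set R, ζΦ W K →
        ζΦ ((fun w : R => w + a) '' W) ((fun w : R => w + a) '' K)) ∧
      (∀ W K : Set R, ζΦ W K →
        ζΦ ((fun w : R => w + (-a)) '' W) ((fun w : R => w + (-a)) '' K))) ∧
    (Function.Bijective (fun w : R => a + w) ∧
      (∀ W K : Set R, ζΦ W K →
        ζΦ ((fun w : R => a + w) '' W) ((fun w : R => a + w) '' K)) ∧
      (∀ W K : Set R, ζΦ W K →
        ζΦ ((fun w : R => (-a) + w) '' W) ((fun w : R => (-a) + w) '' K))) ∧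
    (Function.Bijective (fun w : R => a * w) ∧
      (∀ W K : Set R, ζΦ W K →
        ζΦ ((fun w : R => a * w) '' W) ((fun w : R => a * w) '' K)) ∧
      (∀ W K : Set R, ζΦ W K →
        ζΦ ((fun w : R => b * w) '' W) ((fun w : R => b * w) '' K))) ∧
    (Function.Bijective (fun w : R => w * a) ∧
      (∀ W K : Set R, ζΦ W K →
        ζΦ ((fun w : R => w * a) '' W) ((fun w : R => w * a) '' K)) ∧
      (∀ W K : Set R, ζΦ W K →
        ζΦ ((fun w : R => w * b) '' W) ((fun w : R => w * b) '' K))) := by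
  intro ζΦ hadd hmul a b hab hba
  have hsingle : ∀ c : R, ζΦ {c} {c} := fun c =>
    ⟨Φ c, ⟨c, rfl, rfl⟩, ⟨c, rfl, rfl⟩⟩
  have haddr : ∀ (c : R) (W K : Set R), ζΦ W K →
      ζΦ ((fun w : R => w + c) '' W) ((fun w : R => w + c) '' K) := by
    intro c W K h
    have := hadd W {c} K {c} h (hsingle c)
    rwa [Set.add_singleton, Set.add_singleton] at this
  have haddl : ∀ (c : R) (W K : Set R), ζΦ W K →
      ζΦ ((fun w : R => c + w) '' W) ((fun w : R => c + w) '' K) := by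
    intro c W K h
    have := hadd {c} W {c} K (hsingle c) h
    rwa [Set.singleton_add, Set.singleton_add] at this
  have hmull : ∀ (c : R) (W K : Set R), ζΦ W K →
      ζΦ ((fun w : R => c * w) '' W) ((fun w : R => c * w) '' K) := by
    intro c W K h
    have := hmul {c} W {c} K (hsingle c) h
    rwa [Set.singleton_mul, Set.singleton_mul] at this
  have hmulr : ∀ (c : R) (W K : Set R), ζΦ W K →
      ζΦ ((fun w : R => w * c) '' W) ((fun w : R => w * c) '' K) := by
    intro c W K h
    have := hmul W {c} K {c} h (hsingle c)
    rwa [Set.mul_singleton, Set.mul_singleton] at this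
  refine ⟨⟨(Equiv.addRight a).bijective, haddr a, haddr (-a)⟩,
    ⟨(Equiv.addLeft a).bijective, haddl a, haddl (-a)⟩,
    ⟨⟨fun x y h => ?_, fun y => ⟨b * y, by simp [← mul_assoc, hab]⟩⟩, hmull a, hmull b⟩,
    ⟨⟨fun x y h => ?_, fun y => ⟨y * b, by simp [mul_assoc, hba]⟩⟩, hmulr a, hmulr b⟩⟩
  · have := congrArg (fun z => b * z) h
    simpa [← mul_assoc, hba] using this
  · have := congrArg (fun z => z * b) h
    simpa [mul_assoc, hab] using this
end

section
/- Let R be a ring with unity, X a type, and Φ : R → X a probe function; define the descriptive relation ζ_Φ on subsets of R by A ζ_Φ B iff (Φ '' A) ∩ (Φ '' B) ≠ ∅. Suppose addition, multiplication, and negation are descriptively continuous: for all W₁, W₂, K₁, K₂ ⊆ R, W₁ ζ_Φ K₁ and W₂ ζ_Φ K₂ imply (W₁ + W₂) ζ_Φ (K₁ + K₂) and (W₁ * W₂) ζ_Φ (K₁ * K₂), and W ζ_Φ K implies (−W) ζ_Φ (−K). Let c ∈ R be invertible and let F ⊆ R be ζ_Φ-closed (cl_{ζ_Φ}(F) = F,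 where cl_{ζ_Φ}(A) = {x : {x} ζ_Φ A}). Then the sets c + F, c − F = {c − f : f ∈ F}, c * F, and F * c are all ζ_Φ-closed. -/
open Pointwise

theorem descriptive_closed_translates_of_unit
    {R X : Type*} [Ring R] (Φ : R → X) :
    let ζΦ : Set R → Set R → Prop := fun A B => ((Φ '' A) ∩ (Φ '' B)).Nonempty
    ∀ (_hadd : ∀ W₁ W₂ K₁ K₂ : Set R,
        ζΦ W₁ K₁ → ζΦ W₂ K₂ → ζΦ (W₁ + W₂) (K₁ + K₂))
      (_hmul : ∀ W₁ W₂ K₁ K₂ : Set R,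
        ζΦ W₁ K₁ → ζΦ W₂ K₂ → ζΦ (W₁ * W₂) (K₁ * K₂))
      (_hneg : ∀ W K : Set R, ζΦ W K → ζΦ (-W) (-K))
      (c d : R), c * d = 1 → d * c = 1 →
    ∀ F : Set R, {x : R | ζΦ {x} F} = F →
    ({x : R | ζΦ {x} ((fun f : R => c + f) '' F)} = (fun f : R => c + f) '' F) ∧
    ({x : R | ζΦ {x} ((fun f : R => c - f) '' F)} = (fun f : R => c - f) '' F) ∧
    ({x : R | ζΦ {x} ((fun f : R => c * f) '' F)} = (fun f : R => c * f) '' F) ∧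
    ({x : R | ζΦ {x} ((fun f : R => f * c) '' F)} = (fun f : R => f * c) '' F) := by
  intro ζΦ hadd hmul hneg c d hcd hdc F hF
  -- basic helpers
  have hrefl : ∀ a : R, ζΦ {a} {a} := fun a => ⟨Φ a, ⟨a, rfl, rfl⟩, ⟨a, rfl, rfl⟩⟩
  have key : ∀ a b : R, Φ a = Φ b → ζΦ {a} {b} :=
    fun a b h => ⟨Φ a, ⟨a, rfl, rfl⟩, ⟨b, rfl, h.symm⟩⟩
  have mem_of : ∀ (x : R) (A : Set R), ζΦ {x} A → ∃ a ∈ A, Φ x = Φ a := by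
    rintro x A ⟨y, ⟨x', hx', rfl⟩, ⟨a, ha, hay⟩⟩
    rcases hx' with rfl
    exact ⟨a, ha, hay.symm⟩
  have enlarge : ∀ (y f : R), f ∈ F → ζΦ {y} {f} → y ∈ F := by
    intro y f hf h
    obtain ⟨a, ha, hya⟩ := mem_of y {f} h
    rcases Set.eq_of_mem_singleton ha with rfl
    have : y ∈ {x : R | ζΦ {x} F} := ⟨Φ y, ⟨y, rfl, rfl⟩, ⟨a, hf, hya.symm⟩⟩
    rwa [hF] at this
  have mpr : ∀ (x : R) (A : Set R), x ∈ A → ζΦ {x} A :=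
    fun x A hx => ⟨Φ x, ⟨x, rfl, rfl⟩, ⟨x, hx, rfl⟩⟩
  refine ⟨?_, ?_, ?_, ?_⟩
  · ext x
    simp only [Set.mem_setOf_eq]
    constructor
    · intro hx
      obtain ⟨a, ⟨f, hf, rfl⟩, hxa⟩ := mem_of x _ hx
      have h1 : ζΦ ({-c} + {x}) ({-c} + {c + f}) :=
        hadd _ _ _ _ (hrefl (-c)) (key x (c + f) hxa)
      rw [Set.singleton_add_singleton, Set.singleton_add_singleton,
        neg_add_cancel_left] at h1
      have : -c + x ∈ F := enlarge _ _ hf h1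
      exact ⟨-c + x, this, add_neg_cancel_left c x⟩
    · exact mpr x _
  · ext x
    simp only [Set.mem_setOf_eq]
    constructor
    · intro hx
      obtain ⟨a, ⟨f, hf, rfl⟩, hxa⟩ := mem_of x _ hx
      have h0 : ζΦ (-{x}) (-{c - f}) := hneg _ _ (key x (c - f) hxa)
      rw [Set.neg_singleton, Set.neg_singleton] at h0
      have h1 : ζΦ ({c} + {-x}) ({c} + {-(c - f)}) :=
        hadd _ _ _ _ (hrefl c) h0
      rw [Set.singleton_add_singleton, Set.singleton_add_singleton] at h1
      have he : c + -(c - f) = f := by abel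
      rw [he] at h1
      have : c + -x ∈ F := enlarge _ _ hf h1
      refine ⟨c + -x, this, ?_⟩
      show c - (c + -x) = x
      abel
    · exact mpr x _
  · ext x
    simp only [Set.mem_setOf_eq]
    constructor
    · intro hx
      obtain ⟨a, ⟨f, hf, rfl⟩, hxa⟩ := mem_of x _ hx
      have h1 : ζΦ ({d} * {x}) ({d} * {c * f}) :=
        hmul _ _ _ _ (hrefl d) (key x (c * f) hxa)
      rw [Set.singleton_mul_singleton, Set.singleton_mul_singleton] at h1
      have he : d * (c * f) = f := by rw [← mul_assoc, hdc, one_mul]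
      rw [he] at h1
      have : d * x ∈ F := enlarge _ _ hf h1
      exact ⟨d * x, this, by show c * (d * x) = x; rw [← mul_assoc, hcd, one_mul]⟩
    · exact mpr x _
  · ext x
    simp only [Set.mem_setOf_eq]
    constructor
    · intro hx
      obtain ⟨a, ⟨f, hf, rfl⟩, hxa⟩ := mem_of x _ hx
      have h1 : ζΦ ({x} * {d}) ({f * c} * {d}) :=
        hmul _ _ _ _ (key x (f * c) hxa) (hrefl d)
      rw [Set.singleton_mul_singleton, Set.singleton_mul_singleton] at h1
      have he : f * c * d = f := by rw [mul_assoc, hcd, mul_one]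
      rw [he] at h1
      have : x * d ∈ F := enlarge _ _ hf h1
      exact ⟨x * d, this, by show x * d * c = x; rw [mul_assoc, hdc, mul_one]⟩
    · exact mpr x _
end

section
/- Let R₁, R₂ be rings with probe functions Φ₁ : R₁ → X₁ and Φ₂ : R₂ → X₂, and descriptive relations ζ_{Φ₁}, ζ_{Φ₂} defined by nonempty intersection of probe images. Suppose in each ring addition, multiplication, and negation are descriptively continuous with respect to its descriptive relation (near pairs of sets have near sums, near products, and near negations). Define the product relation ξ on subsets of R₁ × R₂ by A ξ B iff (Prod.fst '' A) ζ_{Φ₁} (Prod.fst '' B) and (Prod.snd '' A) ζ_{Φ₂} (Prod.snd '' B). Then R₁ × R₂ with componentwise operations is a descriptive ring with respect to ξ: addition, multiplication, and negation on R₁ × R₂ are descriptively continuous with respect to ξ. -/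
open Pointwise

private lemma img_neg {R₁ R₂ X : Type*} [Ring R₁] [Ring R₂]
    [Ring X] (f : R₁ × R₂ → X) (hf : ∀ x, f (-x) = -f x) (A : Set (R₁ × R₂)) :
    f '' (-A) = -(f '' A) := by
  rw [← Set.image_neg_eq_neg, ← Set.image_neg_eq_neg, Set.image_image, Set.image_image]
  simp [hf]

theorem descriptive_ring_prod
    {R₁ R₂ X₁ X₂ : Type*} [Ring R₁] [Ring R₂]
    (Φ₁ : R₁ → X₁) (Φ₂ : R₂ → X₂) :
    let ζ₁ : Set R₁ → Set R₁ → Prop := fun A B => ((Φ₁ '' A) ∩ (Φ₁ '' B)).Nonempty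
    let ζ₂ : Set R₂ → Set R₂ → Prop := fun A B => ((Φ₂ '' A) ∩ (Φ₂ '' B)).Nonempty
    let ξ : Set (R₁ × R₂) → Set (R₁ × R₂) → Prop :=
      fun A B => ζ₁ (Prod.fst '' A) (Prod.fst '' B) ∧ ζ₂ (Prod.snd '' A) (Prod.snd '' B)
    ∀ (_hadd₁ : ∀ W₁ W₂ K₁ K₂ : Set R₁,
        ζ₁ W₁ K₁ → ζ₁ W₂ K₂ → ζ₁ (W₁ + W₂) (K₁ + K₂))
      (_hmul₁ : ∀ W₁ W₂ K₁ K₂ : Set R₁,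
        ζ₁ W₁ K₁ → ζ₁ W₂ K₂ → ζ₁ (W₁ * W₂) (K₁ * K₂))
      (_hneg₁ : ∀ W K : Set R₁, ζ₁ W K → ζ₁ (-W) (-K))
      (_hadd₂ : ∀ W₁ W₂ K₁ K₂ : Set R₂,
        ζ₂ W₁ K₁ → ζ₂ W₂ K₂ → ζ₂ (W₁ + W₂) (K₁ + K₂))
      (_hmul₂ : ∀ W₁ W₂ K₁ K₂ : Set R₂,
        ζ₂ W₁ K₁ → ζ₂ W₂ K₂ → ζ₂ (W₁ * W₂) (K₁ * K₂))
      (_hneg₂ : ∀ W K : Set R₂, ζ₂ W K → ζ₂ (-W) (-K)),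
    (∀ W₁ W₂ K₁ K₂ : Set (R₁ × R₂), ξ W₁ K₁ → ξ W₂ K₂ → ξ (W₁ + W₂) (K₁ + K₂)) ∧
    (∀ W₁ W₂ K₁ K₂ : Set (R₁ × R₂), ξ W₁ K₁ → ξ W₂ K₂ → ξ (W₁ * W₂) (K₁ * K₂)) ∧
    (∀ W K : Set (R₁ × R₂), ξ W K → ξ (-W) (-K)) := by
  intro ζ₁ ζ₂ ξ hadd₁ hmul₁ hneg₁ hadd₂ hmul₂ hneg₂
  have f1a : ∀ A B : Set (R₁ × R₂), Prod.fst '' (A + B) = Prod.fst '' A + Prod.fst '' B :=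
    fun A B => Set.image_add (RingHom.fst R₁ R₂)
  have f2a : ∀ A B : Set (R₁ × R₂), Prod.snd '' (A + B) = Prod.snd '' A + Prod.snd '' B :=
    fun A B => Set.image_add (RingHom.snd R₁ R₂)
  have f1m : ∀ A B : Set (R₁ × R₂), Prod.fst '' (A * B) = Prod.fst '' A * Prod.fst '' B :=
    fun A B => Set.image_mul (RingHom.fst R₁ R₂)
  have f2m : ∀ A B : Set (R₁ × R₂), Prod.snd '' (A * B) = Prod.snd '' A * Prod.snd '' B :=
    fun A B => Set.image_mul (RingHom.snd R₁ R₂)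
  have f1n : ∀ A : Set (R₁ × R₂), Prod.fst '' (-A) = -(Prod.fst '' A) :=
    img_neg Prod.fst (fun _ => rfl)
  have f2n : ∀ A : Set (R₁ × R₂), Prod.snd '' (-A) = -(Prod.snd '' A) :=
    img_neg Prod.snd (fun _ => rfl)
  refine ⟨fun W₁ W₂ K₁ K₂ h h' => ?_, fun W₁ W₂ K₁ K₂ h h' => ?_, fun W K h => ?_⟩
  · exact ⟨by rw [f1a, f1a]; exact hadd₁ _ _ _ _ h.1 h'.1,
      by rw [f2a, f2a]; exact hadd₂ _ _ _ _ h.2 h'.2⟩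
  · exact ⟨by rw [f1m, f1m]; exact hmul₁ _ _ _ _ h.1 h'.1,
      by rw [f2m, f2m]; exact hmul₂ _ _ _ _ h.2 h'.2⟩
  · exact ⟨by rw [f1n, f1n]; exact hneg₁ _ _ h.1,
      by rw [f2n, f2n]; exact hneg₂ _ _ h.2⟩
end
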